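/- Let K be a finite group of order l, n ≥ 2, and G = F_n ≀ K the wreath product, with Δ : G → ℤ defined by Δ((f_{k₁},…,f_{k_l})k) = Σ_{i=1}^l ql(f_{k_i}). If g ∈ G is a product of m ≥ 1 commutators [a_1,b_1]⋯[a_m,b_m] with a_i, b_i ∈ G, then |Δ(g)| ≤ 3l(6m - 1). -/

import Mathlib

/-- `tr m` is `-1, 0, 1` according as `m ≡ -1, 0, 1 (mod 3)`. -/
def tr (m : ℤ) : ℤ := if m % 3 = 0 then 0 else if m % 3 = 1 then 1 else -1

/-- `ql w` is the sum of `tr` of the exponents of the syllables in the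
reduced syllable form of `w`: the reduced word `w.toWord` is split into maximal
runs (syllables) of letters with the same generator, and each syllable
`x_i ^ α` contributes `tr α`. -/
def ql {n : ℕ} (w : FreeGroup (Fin n)) : ℤ :=
  ((w.toWord.splitBy (fun p q => p.1 == q.1)).map
    (fun s => tr ((s.map (fun p => if p.2 then (1 : ℤ) else -1)).sum))).sum

/-- The permutation action of `K` on the base group `K → H` of the wreath product
`H ≀ K`, by left translation on the index set: `(k • f) k' = f (k⁻¹ * k')`. -/
def wreathAction (H K : Type*) [Group H] [Group K] : K →* MulAut (K → H) where
  toFun k :=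
    { toFun := fun f x => f (k⁻¹ * x)
      invFun := fun f x => f (k * x)
      left_inv := fun f => by funext x; simp [← mul_assoc]
      right_inv := fun f => by funext x; simp [← mul_assoc]
      map_mul' := fun f g => rfl }
  map_one' := by
    ext f x
    simp
  map_mul' := fun a b => by
    ext f x
    simp [mul_assoc]

/-- The wreath product `H ≀ K = (∏_{k ∈ K} H) ⋊ K`. -/
abbrev WreathProduct (H K : Type*) [Group H] [Group K] :=
  SemidirectProduct (K → H) K (wreathAction H K)

/-- The quasi-homomorphism `Δ : Fₙ ≀ K → ℤ`, `Δ((f_{k₁}, …, f_{k_l})k) = Σᵢ ql(f_{kᵢ})`. -/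
def Δ {n : ℕ} {K : Type*} [Group K] [Fintype K]
    (g : WreathProduct (FreeGroup (Fin n)) K) : ℤ :=
  ∑ k : K, ql (g.left k)

/-!
The function `ql` is a quasimorphism of defect `3` with `ql w⁻¹ = -ql w`. Write the reduced
words of `x` and `y` as `a c⁻¹` and `c b`, so that `x y` is the reduced word `a b`. The syllable
sum of a concatenation is the sum over the two pieces unless their boundary syllables (exponents
`α`, `β`) merge, which changes it by `tr (α + β) - tr α - tr β ∈ [-3, 3]`; reducedness of `a c⁻¹`,
`c b` and `a b` lets at most one of the three boundaries merge. Summing over the `l` coordinates,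
`Δ` is an odd quasimorphism of defect `3l`, so a commutator has `|Δ| ≤ 9l`, and a product of `m`
commutators has `|Δ| ≤ 9lm + 3lm ≤ 3l(6m - 1)`.
-/

namespace FreeGroup

variable {α : Type*}

def letterSign (p : α × Bool) : ℤ := if p.2 then 1 else -1

def exponentSum (s : List (α × Bool)) : ℤ := (s.map letterSign).sum

def IsSyllable (x : α) (s : List (α × Bool)) : Prop := s ≠ [] ∧ ∀ p ∈ s, p.1 = x

/-- The boundary syllables of `L` and `M` merge into one syllable of `L ++ M`. -/
def Joins (L M : List (α × Bool)) : Prop := ∃ p ∈ L.getLast?, ∃ q ∈ M.head?, p.1 = q.1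

@[simp] theorem exponentSum_append (s t : List (α × Bool)) :
    exponentSum (s ++ t) = exponentSum s + exponentSum t := by
  simp [exponentSum]

@[simp] theorem exponentSum_invRev (s : List (α × Bool)) :
    exponentSum (invRev s) = -exponentSum s := by
  induction s with
  | nil => rfl
  | cons p s ih =>
    rw [invRev_cons, exponentSum_append, ih]
    rcases p with ⟨x, _ | _⟩ <;> simp [exponentSum, invRev, letterSign]

theorem getLast?_invRev (L : List (α × Bool)) :
    (invRev L).getLast? = L.head?.map fun q => (q.1, !q.2) := by
  simp [invRev]

theorem head?_invRev (L : List (α × Bool)) :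
    (invRev L).head? = L.getLast?.map fun q => (q.1, !q.2) := by
  simp [invRev]

theorem IsSyllable.append {x : α} {s t : List (α × Bool)} (hs : IsSyllable x s)
    (ht : IsSyllable x t) : IsSyllable x (s ++ t) := by
  refine ⟨by simp [hs.1], fun p hp => ?_⟩
  rcases List.mem_append.1 hp with hp | hp
  exacts [hs.2 p hp, ht.2 p hp]

theorem IsSyllable.invRev {x : α} {s : List (α × Bool)} (hs : IsSyllable x s) :
    IsSyllable x (invRev s) := by
  refine ⟨by simpa [FreeGroup.invRev] using hs.1, fun p hp => ?_⟩
  simp only [FreeGroup.invRev, List.mem_reverse, List.mem_map] at hp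
  obtain ⟨q, hq, rfl⟩ := hp
  exact hs.2 q hq

theorem IsSyllable.reverse {x : α} {s : List (α × Bool)} (hs : IsSyllable x s) :
    IsSyllable x s.reverse :=
  ⟨by simpa using hs.1, by simpa using hs.2⟩

theorem atMostOne_joins {a c b : List (α × Bool)} (hx : IsReduced (a ++ invRev c))
    (hy : IsReduced (c ++ b)) (hxy : IsReduced (a ++ b)) :
    (Joins a (invRev c) → ¬Joins c b ∧ ¬Joins a b) ∧ (Joins c b → ¬Joins a b) := by
  have key : ∀ p ∈ a.getLast?, ∀ r ∈ c.getLast?, ∀ q ∈ b.head?, p.1 = r.1 → r.1 ≠ q.1 := by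
    intro p hp r hr q hq hpr hrq
    have h₁ := (List.isChain_append.1 hx).2.2 p hp (r.1, !r.2)
      (by rw [head?_invRev]; exact Option.mem_map_of_mem _ hr) hpr
    have h₂ := (List.isChain_append.1 hy).2.2 r hr q hq hrq
    have h₃ := (List.isChain_append.1 hxy).2.2 p hp q hq (hpr.trans hrq)
    simp_all
  refine ⟨fun ⟨p, hp, r', hr', hpr⟩ => ?_, fun ⟨r, hr, q, hq, hrq⟩ ⟨p, hp, q', hq', hpq⟩ => ?_⟩
  · rw [head?_invRev] at hr'
    obtain ⟨r, hr, rfl⟩ := Option.mem_map.1 hr'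
    refine ⟨fun ⟨r₂, hr₂, q, hq, hrq⟩ => ?_, fun ⟨p₂, hp₂, q, hq, hpq⟩ => ?_⟩
    · obtain rfl := Option.mem_unique hr hr₂
      exact key p hp r hr q hq hpr hrq
    · obtain rfl := Option.mem_unique hp hp₂
      exact key p hp r hr q hq hpr (hpr.symm.trans hpq)
  · obtain rfl := Option.mem_unique hq hq'
    exact key p hp r hr q hq (hpq.trans hrq.symm) hrq

variable [DecidableEq α]

def syllableSum (f : ℤ → ℤ) (L : List (α × Bool)) : ℤ :=
  ((L.splitBy fun p q => p.1 == q.1).map fun s => f (exponentSum s)).sum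

@[simp] theorem syllableSum_nil (f : ℤ → ℤ) : syllableSum f ([] : List (α × Bool)) = 0 := rfl

variable {f : ℤ → ℤ}

theorem syllableSum_append_of_not_joins {L M : List (α × Bool)} (h : ¬Joins L M) :
    syllableSum f (L ++ M) = syllableSum f L + syllableSum f M := by
  have hsplit : ∀ p ∈ L.getLast?, ∀ q ∈ M.head?, (p.1 == q.1) = false := by
    intro p hp q hq
    simpa using fun hpq => h ⟨p, hp, q, hq, hpq⟩
  simp [syllableSum, List.splitBy_append hsplit]

theorem syllableSum_of_isSyllable {x : α} {s : List (α × Bool)} (hs : IsSyllable x s) :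
    syllableSum f s = f (exponentSum s) := by
  have hchain : s.IsChain fun p q => (p.1 == q.1) = true :=
    (List.pairwise_of_forall_mem_list fun p hp q hq => by simp [hs.2 p hp, hs.2 q hq]).isChain
  simp [syllableSum, List.splitBy_of_isChain hs.1 hchain]

theorem syllableSum_append_isSyllable_append {x : α} {M s N : List (α × Bool)}
    (hM : ∀ q ∈ M.getLast?, q.1 ≠ x) (hs : IsSyllable x s) (hN : ∀ q ∈ N.head?, q.1 ≠ x) :
    syllableSum f (M ++ s ++ N) = syllableSum f M + f (exponentSum s) + syllableSum f N := by
  obtain ⟨p, s', rfl⟩ := List.exists_cons_of_ne_nil hs.1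
  have hp : p.1 = x := hs.2 p List.mem_cons_self
  have hMs : ¬Joins M (p :: s' ++ N) := by
    rintro ⟨q, hq, _, ⟨⟩, hqp⟩
    exact hM q hq (hqp.trans hp)
  have hsN : ¬Joins (p :: s') N := by
    rintro ⟨q, hq, r, hr, hqr⟩
    exact hN r hr (hqr.symm.trans (hs.2 q (List.mem_of_mem_getLast? hq)))
  rw [List.append_assoc, syllableSum_append_of_not_joins hMs, syllableSum_append_of_not_joins hsN,
    syllableSum_of_isSyllable hs, add_assoc]

theorem exists_isSyllable_append {L : List (α × Bool)} {p : α × Bool} (hp : L.head? = some p) :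
    ∃ s M, L = s ++ M ∧ IsSyllable p.1 s ∧ ∀ q ∈ M.head?, q.1 ≠ p.1 := by
  obtain ⟨L, rfl⟩ : ∃ L', L = p :: L' := by
    cases L <;> simp_all
  refine ⟨(p :: L).takeWhile (·.1 == p.1), (p :: L).dropWhile (·.1 == p.1),
    List.takeWhile_append_dropWhile.symm, ⟨by simp, fun q hq => ?_⟩,
    fun q hq => ?_⟩
  · simpa using List.mem_takeWhile_imp hq
  · have := List.head?_dropWhile_not (·.1 == p.1) (p :: L)
    rw [hq] at this
    simpa using this

theorem exists_append_isSyllable {L : List (α × Bool)} {p : α × Bool}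
    (hp : L.getLast? = some p) :
    ∃ M s, L = M ++ s ∧ IsSyllable p.1 s ∧ ∀ q ∈ M.getLast?, q.1 ≠ p.1 := by
  obtain ⟨s, M, hL, hs, hM⟩ := exists_isSyllable_append (L := L.reverse) (by simpa using hp)
  exact ⟨M.reverse, s.reverse, by simpa using congrArg List.reverse hL, hs.reverse,
    by simpa using hM⟩

theorem abs_syllableSum_append_sub_le {C : ℤ} (hf : ∀ m, |f m| ≤ C) (L M : List (α × Bool)) :
    |syllableSum f (L ++ M) - syllableSum f L - syllableSum f M| ≤ 3 * C := by
  by_cases h : Joins L M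
  · obtain ⟨p, hp, q, hq, hpq⟩ := h
    obtain ⟨L', s, rfl, hs, hL'⟩ := exists_append_isSyllable hp
    obtain ⟨t, M', rfl, ht, hM'⟩ := exists_isSyllable_append hq
    rw [← hpq] at ht hM'
    have hL := syllableSum_append_isSyllable_append (f := f) hL' hs (N := []) (by simp)
    have hM := syllableSum_append_isSyllable_append (f := f) (M := []) (by simp) ht hM'
    have hLM := syllableSum_append_isSyllable_append (f := f) hL' (hs.append ht) hM'
    simp only [List.append_nil, List.nil_append, syllableSum_nil] at hL hM
    rw [show L' ++ s ++ (t ++ M') = L' ++ (s ++ t) ++ M' by simp, hLM, hL, hM, exponentSum_append]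
    have h₁ := abs_le.1 (hf (exponentSum s + exponentSum t))
    have h₂ := abs_le.1 (hf (exponentSum s))
    have h₃ := abs_le.1 (hf (exponentSum t))
    rw [abs_le]
    constructor <;> linarith [h₁.1, h₁.2, h₂.1, h₂.2, h₃.1, h₃.2]
  · rw [syllableSum_append_of_not_joins h, sub_sub, sub_self, abs_zero]
    linarith [(abs_nonneg (f 0)).trans (hf 0)]

theorem syllableSum_invRev (hf : ∀ m, f (-m) = -f m) (L : List (α × Bool)) :
    syllableSum f (invRev L) = -syllableSum f L := by
  induction hn : L.length using Nat.strong_induction_on generalizing L with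
  | _ n ih =>
  rcases hp : L.head? with _ | p
  · simp [List.head?_eq_none_iff.1 hp]
  obtain ⟨s, M, rfl, hs, hM⟩ := exists_isSyllable_append hp
  have hlen : M.length < n := by
    rw [← hn, List.length_append]
    have := List.length_pos_iff.2 hs.1
    omega
  have hM' : ∀ q ∈ (invRev M).getLast?, q.1 ≠ p.1 := by
    intro q hq
    rw [getLast?_invRev] at hq
    obtain ⟨r, hr, rfl⟩ := Option.mem_map.1 hq
    exact hM r hr
  have hinv := syllableSum_append_isSyllable_append (f := f) hM' hs.invRev (N := []) (by simp)
  have h := syllableSum_append_isSyllable_append (f := f) (M := []) (by simp) hs hM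
  simp only [List.append_nil, List.nil_append, syllableSum_nil] at hinv h
  rw [invRev_append, hinv, h, ih _ hlen M rfl, exponentSum_invRev, hf]
  ring

theorem exists_reduce_append {u v : List (α × Bool)} (hu : IsReduced u) (hv : IsReduced v) :
    ∃ a c b, u = a ++ invRev c ∧ v = c ++ b ∧ reduce (u ++ v) = a ++ b := by
  induction v generalizing u with
  | nil => exact ⟨u, [], [], by simp, rfl, by simpa using hu.reduce_eq⟩
  | cons y v ih =>
    by_cases hcancel : ∃ u', u = u' ++ [(y.1, !y.2)]
    · obtain ⟨u', rfl⟩ := hcancel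
      obtain ⟨a, c, b, rfl, rfl, hab⟩ :=
        ih (hu.infix (List.prefix_append _ _).isInfix) (hv.infix (List.suffix_cons _ _).isInfix)
      refine ⟨a, y :: c, b, by simp [invRev], rfl, ?_⟩
      rw [← hab]
      apply reduce.Step.eq
      simpa using Red.Step.not (L₁ := a ++ invRev c) (L₂ := c ++ b) (x := y.1) (b := !y.2)
    · refine ⟨u, [], y :: v, by simp, rfl, IsReduced.reduce_eq ?_⟩
      refine List.isChain_append.2 ⟨hu, hv, fun p hp q hq hpq => ?_⟩
      obtain rfl : y = q := by simpa using hq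
      by_contra hne
      refine hcancel ⟨u.dropLast, ?_⟩
      rw [← List.dropLast_append_getLast? p hp]
      simpa [Prod.ext_iff, hpq] using Bool.eq_not_iff.2 hne

theorem exists_toWord_mul (x y : FreeGroup α) :
    ∃ a c b, x.toWord = a ++ invRev c ∧ y.toWord = c ++ b ∧ (x * y).toWord = a ++ b := by
  rw [toWord_mul]
  exact exists_reduce_append isReduced_toWord isReduced_toWord

theorem abs_syllableSum_toWord_mul_sub_le {C : ℤ} (hf : ∀ m, |f m| ≤ C)
    (hodd : ∀ m, f (-m) = -f m) (x y : FreeGroup α) :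
    |syllableSum f (x * y).toWord - syllableSum f x.toWord - syllableSum f y.toWord| ≤ 3 * C := by
  obtain ⟨a, c, b, hx, hy, hxy⟩ := exists_toWord_mul x y
  obtain ⟨h₁, h₂⟩ := atMostOne_joins (hx ▸ isReduced_toWord) (hy ▸ isReduced_toWord)
    (hxy ▸ isReduced_toWord)
  have hc := syllableSum_invRev hodd c
  rw [hx, hy, hxy]
  by_cases J₁ : Joins a (invRev c)
  · obtain ⟨J₂, J₃⟩ := h₁ J₁
    have := abs_syllableSum_append_sub_le hf a (invRev c)
    rw [syllableSum_append_of_not_joins J₂, syllableSum_append_of_not_joins J₃]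
    rw [abs_le] at *
    constructor <;> linarith
  rw [syllableSum_append_of_not_joins J₁]
  by_cases J₂ : Joins c b
  · have := abs_syllableSum_append_sub_le hf c b
    rw [syllableSum_append_of_not_joins (h₂ J₂)]
    rw [abs_le] at *
    constructor <;> linarith
  · have := abs_syllableSum_append_sub_le hf a b
    rw [syllableSum_append_of_not_joins J₂]
    rw [abs_le] at *
    constructor <;> linarith

end FreeGroup

theorem ql_eq_syllableSum {n : ℕ} (w : FreeGroup (Fin n)) :
    ql w = FreeGroup.syllableSum tr w.toWord := rfl

theorem abs_tr_le (m : ℤ) : |tr m| ≤ 1 := by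
  unfold tr; split_ifs <;> simp

theorem tr_neg (m : ℤ) : tr (-m) = -tr m := by
  unfold tr; split_ifs <;> omega

def IsQuasimorphism {G : Type*} [Group G] (φ : G → ℤ) (D : ℤ) : Prop :=
  ∀ x y, |φ (x * y) - φ x - φ y| ≤ D

theorem ql_isQuasimorphism (n : ℕ) : IsQuasimorphism (ql (n := n)) 3 := by
  intro x y
  simpa only [ql_eq_syllableSum, mul_one] using
    FreeGroup.abs_syllableSum_toWord_mul_sub_le abs_tr_le tr_neg x y

theorem ql_inv {n : ℕ} (w : FreeGroup (Fin n)) : ql w⁻¹ = -ql w := by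
  rw [ql_eq_syllableSum, ql_eq_syllableSum, FreeGroup.toWord_inv,
    FreeGroup.syllableSum_invRev tr_neg]

namespace IsQuasimorphism

variable {G : Type*} [Group G] {φ : G → ℤ} {D : ℤ}

theorem abs_commutator_le (hφ : IsQuasimorphism φ D) (hinv : ∀ x, φ x⁻¹ = -φ x) (a b : G) :
    |φ (a⁻¹ * b⁻¹ * a * b)| ≤ 3 * D := by
  have h₁ := hφ a⁻¹ b⁻¹
  have h₂ := hφ (a⁻¹ * b⁻¹) a
  have h₃ := hφ (a⁻¹ * b⁻¹ * a) b
  rw [hinv, hinv] at h₁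
  rw [abs_le] at *
  constructor <;> linarith

theorem abs_prod_ofFn_sub_sum_le (hφ : IsQuasimorphism φ D) (h₁ : φ 1 = 0) {m : ℕ}
    (c : Fin m → G) : |φ (List.ofFn c).prod - ∑ i, φ (c i)| ≤ m * D := by
  induction m with
  | zero => simp [h₁]
  | succ m ih =>
    have hmul := hφ (c 0) (List.ofFn fun i => c i.succ).prod
    have hrest := ih fun i => c i.succ
    rw [List.ofFn_succ, List.prod_cons, Fin.sum_univ_succ]
    push_cast
    rw [abs_le] at *
    constructor <;> linarith

theorem abs_prod_commutators_le (hφ : IsQuasimorphism φ D) (hinv : ∀ x, φ x⁻¹ = -φ x) {m : ℕ}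
    (a b : Fin m → G) :
    |φ (List.ofFn fun i => (a i)⁻¹ * (b i)⁻¹ * a i * b i).prod| ≤ 4 * m * D := by
  have h₁ : φ 1 = 0 := by linarith [inv_one (G := G) ▸ hinv 1]
  have hsum : |∑ i, φ ((a i)⁻¹ * (b i)⁻¹ * a i * b i)| ≤ m * (3 * D) := by
    calc _ ≤ ∑ i, |φ ((a i)⁻¹ * (b i)⁻¹ * a i * b i)| := Finset.abs_sum_le_sum_abs _ _
      _ ≤ ∑ _i : Fin m, 3 * D := Finset.sum_le_sum fun i _ => hφ.abs_commutator_le hinv (a i) (b i)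
      _ = m * (3 * D) := by simp
  have hprod := hφ.abs_prod_ofFn_sub_sum_le h₁ fun i => (a i)⁻¹ * (b i)⁻¹ * a i * b i
  have := abs_sub_abs_le_abs_sub (φ (List.ofFn fun i => (a i)⁻¹ * (b i)⁻¹ * a i * b i).prod)
    (∑ i, φ ((a i)⁻¹ * (b i)⁻¹ * a i * b i))
  linarith

theorem sum_left {H K : Type*} [Group H] [Group K] [Fintype K] {ψ : H → ℤ}
    (hψ : IsQuasimorphism ψ D) :
    IsQuasimorphism (fun g : WreathProduct H K => ∑ k, ψ (g.left k)) (Fintype.card K * D) := by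
  intro x y
  have hy : ∑ k, ψ (y.left (x.right⁻¹ * k)) = ∑ k, ψ (y.left k) :=
    Fintype.sum_equiv (Equiv.mulLeft x.right⁻¹) _ _ fun _ => rfl
  calc |∑ k, ψ ((x * y).left k) - ∑ k, ψ (x.left k) - ∑ k, ψ (y.left k)|
      = |∑ k, (ψ (x.left k * y.left (x.right⁻¹ * k)) - ψ (x.left k)
          - ψ (y.left (x.right⁻¹ * k)))| := by
        rw [← hy, Finset.sum_sub_distrib, Finset.sum_sub_distrib]
        rfl
    _ ≤ ∑ _k : K, D := (Finset.abs_sum_le_sum_abs _ _).trans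
        (Finset.sum_le_sum fun k _ => hψ _ _)
    _ = Fintype.card K * D := by simp

end IsQuasimorphism

theorem WreathProduct.sum_left_inv {H K : Type*} [Group H] [Group K] [Fintype K] {ψ : H → ℤ}
    (hinv : ∀ h, ψ h⁻¹ = -ψ h) (g : WreathProduct H K) :
    ∑ k, ψ (g⁻¹.left k) = -∑ k, ψ (g.left k) := by
  have hleft : ∀ k, g⁻¹.left k = (g.left (g.right * k))⁻¹ := fun k => by
    show (g.left⁻¹) (g.right⁻¹⁻¹ * k) = _
    rw [inv_inv]
    rfl
  simp_rw [hleft, hinv, Finset.sum_neg_distrib]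
  congr 1
  exact Fintype.sum_equiv (Equiv.mulLeft g.right) _ _ fun _ => rfl

theorem delta_prod_commutators_general (n : ℕ) (K : Type*) [Group K] [Fintype K]
    (m : ℕ) (hm : 1 ≤ m) (g : WreathProduct (FreeGroup (Fin n)) K)
    (a b : Fin m → WreathProduct (FreeGroup (Fin n)) K)
    (hg : g = (List.ofFn fun i => (a i)⁻¹ * (b i)⁻¹ * a i * b i).prod) :
    |Δ g| ≤ 3 * (Fintype.card K : ℤ) * (6 * (m : ℤ) - 1) := by
  have hΔ : IsQuasimorphism (Δ (K := K)) (Fintype.card K * 3) := (ql_isQuasimorphism n).sum_left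
  have hinv : ∀ g : WreathProduct (FreeGroup (Fin n)) K, Δ g⁻¹ = -Δ g :=
    WreathProduct.sum_left_inv ql_inv
  have hK : (0 : ℤ) ≤ Fintype.card K := Int.natCast_nonneg _
  have hm' : (1 : ℤ) ≤ m := by exact_mod_cast hm
  calc |Δ g| ≤ 4 * m * (Fintype.card K * 3) := hg ▸ hΔ.abs_prod_commutators_le hinv a b
    _ ≤ 3 * Fintype.card K * (6 * m - 1) := by nlinarith

/-- If `g ∈ Fₙ ≀ K` is a product of `m ≥ 1` commutators then `|Δ(g)| ≤ 3l(6m - 1)`,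
where `l = |K|`. -/
theorem delta_prod_commutators (n : ℕ) (hn : 2 ≤ n) (K : Type*) [Group K] [Fintype K]
    (m : ℕ) (hm : 1 ≤ m) (g : WreathProduct (FreeGroup (Fin n)) K)
    (a b : Fin m → WreathProduct (FreeGroup (Fin n)) K)
    (hg : g = (List.ofFn fun i => (a i)⁻¹ * (b i)⁻¹ * a i * b i).prod) :
    |Δ g| ≤ 3 * (Fintype.card K : ℤ) * (6 * (m : ℤ) - 1) :=
  delta_prod_commutators_general n K m hm g a b hg
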